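/- Any linear system (P,ℒ) with 2-packing number ν₂ = 4 and maximum degree Δ ≥ 5 has transversal number τ ≤ 3 (that is, τ ≤ ν₂ − 1). -/

import Mathlib

/-!
Let `p` be a point of degree `Δ ≥ 5` and let `M` be the set of lines missing `p`.

If some three lines of `M` form a 2-packing `B`, they have at most three pairwise intersection
points, none equal to `p`; each of them lies on at most one line through `p`, so at least two lines
`m₁, m₂` through `p` avoid them all, and `B ∪ {m₁, m₂}` is a 2-packing of five lines, contradicting
`ν₂ = 4`.

Otherwise any three lines of `M` are concurrent. Then `M` is covered by at most two points (one
point per line if `|M| ≤ 2`, and the common point of all of `M` otherwise), which together with `p`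
form a transversal of size at most `3`.
-/

open Finset

/-- `(P, L)` is a linear system: lines are nonempty subsets of the point set `P`,
and any two distinct lines share at most one point. -/
def IsLinearSystem {α : Type*} [DecidableEq α] (P : Finset α) (L : Finset (Finset α)) : Prop :=
  (∀ l ∈ L, l.Nonempty) ∧ (∀ l ∈ L, l ⊆ P) ∧
    ∀ l ∈ L, ∀ l' ∈ L, l ≠ l' → (l ∩ l').card ≤ 1

/-- `T` is a transversal of the linear system `(P, L)`. -/
def IsTransversal {α : Type*} [DecidableEq α] (P : Finset α) (L : Finset (Finset α))
    (T : Finset α) : Prop :=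
  T ⊆ P ∧ ∀ l ∈ L, (T ∩ l).Nonempty

/-- The transversal number `τ` of `(P, L)`. -/
noncomputable def tau {α : Type*} [DecidableEq α] (P : Finset α) (L : Finset (Finset α)) : ℕ :=
  sInf {n | ∃ T : Finset α, IsTransversal P L T ∧ T.card = n}

/-- `R` is a 2-packing of `L`: no three distinct lines of `R` have a common point. -/
def Is2Packing {α : Type*} [DecidableEq α] (L R : Finset (Finset α)) : Prop :=
  R ⊆ L ∧ ∀ l₁ ∈ R, ∀ l₂ ∈ R, ∀ l₃ ∈ R,
    l₁ ≠ l₂ → l₁ ≠ l₃ → l₂ ≠ l₃ → l₁ ∩ l₂ ∩ l₃ = ∅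

/-- The 2-packing number `ν₂` of `(P, L)`. -/
noncomputable def nu2 {α : Type*} [DecidableEq α] (L : Finset (Finset α)) : ℕ :=
  sSup {n | ∃ R : Finset (Finset α), Is2Packing L R ∧ R.card = n}

/-- The degree of a point `p`: the number of lines containing `p`. -/
def degree {α : Type*} [DecidableEq α] (L : Finset (Finset α)) (p : α) : ℕ :=
  (L.filter fun l => p ∈ l).card

/-- The maximum degree `Δ` over all points of `P`. -/
def maxDegree {α : Type*} [DecidableEq α] (P : Finset α) (L : Finset (Finset α)) : ℕ :=
  P.sup (degree L)

section

variable {α : Type*} [DecidableEq α] {P : Finset α} {L B R : Finset (Finset α)}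

lemma IsLinearSystem.mono {M : Finset (Finset α)} (hL : IsLinearSystem P L) (hM : M ⊆ L) :
    IsLinearSystem P M :=
  ⟨fun l hl => hL.1 l (hM hl), fun l hl => hL.2.1 l (hM hl),
    fun l hl l' hl' => hL.2.2 l (hM hl) l' (hM hl')⟩

lemma IsLinearSystem.eq_of_mem_inter {l l' : Finset α} {x y : α} (hL : IsLinearSystem P L)
    (hl : l ∈ L) (hl' : l' ∈ L) (hne : l ≠ l') (hx : x ∈ l ∩ l') (hy : y ∈ l ∩ l') : x = y :=
  card_le_one.1 (hL.2.2 l hl l' hl' hne) x hx y hy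

lemma tau_le_card {T : Finset α} (hT : IsTransversal P L T) : tau P L ≤ #T :=
  Nat.sInf_le ⟨T, hT, rfl⟩

lemma card_le_nu2 (hR : Is2Packing L R) : #R ≤ nu2 L :=
  le_csSup ⟨#L, by rintro n ⟨R', hR', rfl⟩; exact card_le_card hR'.1⟩ ⟨R, hR, rfl⟩

lemma degree_insert {m : Finset α} (hm : m ∉ R) (x : α) :
    degree (insert m R) x = degree R x + if x ∈ m then 1 else 0 := by
  unfold degree
  rw [filter_insert]
  split_ifs
  · exact card_insert_of_notMem (fun h => hm (mem_filter.1 h).1)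
  · rfl

lemma degree_eq_zero_of_forall_notMem {x : α} (h : ∀ l ∈ R, x ∉ l) : degree R x = 0 :=
  card_eq_zero.2 (filter_eq_empty_iff.2 h)

lemma is2Packing_iff_degree_le_two : Is2Packing L R ↔ R ⊆ L ∧ ∀ x, degree R x ≤ 2 := by
  refine and_congr_right fun _ => ⟨fun h x => ?_, fun h a ha b hb c hc hab hac hbc => ?_⟩
  · by_contra! hx
    obtain ⟨a, b, c, ha, hb, hc, hab, hac, hbc⟩ := two_lt_card_iff.1 hx
    simp only [mem_filter] at ha hb hc
    have := h a ha.1 b hb.1 c hc.1 hab hac hbc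
    exact eq_empty_iff_forall_notMem.1 this x (by simp [ha.2, hb.2, hc.2])
  · by_contra hne
    obtain ⟨x, hx⟩ := nonempty_iff_ne_empty.2 hne
    simp only [mem_inter] at hx
    have : 2 < degree R x := two_lt_card_iff.2
      ⟨a, b, c, by simp [ha, hx], by simp [hb, hx], by simp [hc, hx], hab, hac, hbc⟩
    exact absurd (h x) (by omega)

lemma exists_forall_mem_of_not_is2Packing (hBL : B ⊆ L) (hB : #B ≤ 3) (h : ¬Is2Packing L B) :
    ∃ x, ∀ l ∈ B, x ∈ l := by
  simp only [is2Packing_iff_degree_le_two, hBL, true_and, not_forall, not_le] at h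
  obtain ⟨x, hx⟩ := h
  exact ⟨x, card_filter_eq_iff.1 (le_antisymm (card_filter_le _ _) (by unfold degree at hx; omega))⟩

lemma exists_isTransversal_card_le_card (hL : IsLinearSystem P L) :
    ∃ T, IsTransversal P L T ∧ #T ≤ #L := by
  choose f hf using hL.1
  refine ⟨L.attach.image fun l => f l.1 l.2, ⟨fun x hx => ?_, fun l hl => ?_⟩,
    card_image_le.trans card_attach.le⟩
  · obtain ⟨⟨l, hl⟩, -, rfl⟩ := mem_image.1 hx
    exact hL.2.1 l hl (hf l hl)
  · exact ⟨f l hl, mem_inter.2 ⟨mem_image.2 ⟨⟨l, hl⟩, mem_attach _ _, rfl⟩, hf l hl⟩⟩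

lemma exists_isTransversal_card_le_two_of_concurrent (hL : IsLinearSystem P L)
    (h : ∀ B ⊆ L, #B = 3 → ∃ x, ∀ l ∈ B, x ∈ l) : ∃ T, IsTransversal P L T ∧ #T ≤ 2 := by
  rcases le_or_gt #L 2 with hL2 | hL2
  · obtain ⟨T, hT, hTL⟩ := exists_isTransversal_card_le_card hL
    exact ⟨T, hT, hTL.trans hL2⟩
  obtain ⟨a, b, c, ha, hb, hc, hab, hac, hbc⟩ := two_lt_card_iff.1 hL2
  obtain ⟨q, hq⟩ := h {a, b, c} (by simp [insert_subset_iff, ha, hb, hc])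
    (card_eq_three.2 ⟨a, b, c, hab, hac, hbc, rfl⟩)
  have hqa : q ∈ a := hq a (by simp)
  have hqb : q ∈ b := hq b (by simp)
  refine ⟨{q}, ⟨singleton_subset_iff.2 (hL.2.1 a ha hqa), fun l hl => ?_⟩, by simp⟩
  suffices q ∈ l from ⟨q, by simp [this]⟩
  by_cases hla : l = a
  · exact hla ▸ hqa
  by_cases hlb : l = b
  · exact hlb ▸ hqb
  obtain ⟨x, hx⟩ := h {a, b, l} (by simp [insert_subset_iff, ha, hb, hl])
    (card_eq_three.2 ⟨a, b, l, hab, Ne.symm hla, Ne.symm hlb, rfl⟩)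
  have hxq : x = q :=
    hL.eq_of_mem_inter ha hb hab (mem_inter.2 ⟨hx a (by simp), hx b (by simp)⟩)
      (mem_inter.2 ⟨hqa, hqb⟩)
  exact hxq ▸ hx l (by simp)

lemma IsTransversal.insert_of_filter_notMem {p : α} {T : Finset α}
    (hT : IsTransversal P (L.filter (p ∉ ·)) T) (hp : p ∈ P) : IsTransversal P L (insert p T) := by
  refine ⟨insert_subset hp hT.1, fun l hl => ?_⟩
  by_cases hpl : p ∈ l
  · exact ⟨p, by simp [hpl]⟩
  · exact (hT.2 l (mem_filter.2 ⟨hl, hpl⟩)).mono (inter_subset_inter_right (subset_insert _ _))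

lemma card_filter_two_le_degree_le_choose (hB : IsLinearSystem P B) :
    #(P.filter (2 ≤ degree B ·)) ≤ (#B).choose 2 := by
  rw [← card_powersetCard]
  refine card_le_card_of_forall_subsingleton (fun x s => ∀ l ∈ s, x ∈ l) (fun x hx => ?_)
    (fun s hs x hx y hy => ?_)
  · obtain ⟨s, hs, hs2⟩ := exists_subset_card_eq (mem_filter.1 hx).2
    exact ⟨s, mem_powersetCard.2 ⟨hs.trans (filter_subset _ _), hs2⟩,
      fun l hl => (mem_filter.1 (hs hl)).2⟩
  · obtain ⟨hsB, hs2⟩ := mem_powersetCard.1 hs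
    obtain ⟨l, l', hne, rfl⟩ := card_eq_two.1 hs2
    have hl := hsB (mem_insert_self _ _)
    have hl' := hsB (mem_insert_of_mem (mem_singleton_self _))
    exact hB.eq_of_mem_inter hl hl' hne (by simp [hx.2]) (by simp [hy.2])

lemma card_lines_through_meeting_le {p : α} {Q : Finset α} (hL : IsLinearSystem P L) (hpQ : p ∉ Q) :
    #((L.filter (p ∈ ·)).filter fun m => ∃ x ∈ Q, x ∈ m) ≤ #Q := by
  refine card_le_card_of_forall_subsingleton (fun m x => x ∈ m) (fun m hm => (mem_filter.1 hm).2)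
    (fun x hx m hm m' hm' => ?_)
  simp only [mem_filter, Set.mem_ofPred_eq] at hm hm'
  by_contra hne
  exact hpQ (hL.eq_of_mem_inter hm.1.1.1 hm'.1.1.1 hne (mem_inter.2 ⟨hm.2, hm'.2⟩)
    (mem_inter.2 ⟨hm.1.1.2, hm'.1.1.2⟩) ▸ hx)

lemma Is2Packing.insert_insert {p : α} {m₁ m₂ : Finset α} (hL : IsLinearSystem P L)
    (hB : Is2Packing L B) (hpB : ∀ l ∈ B, p ∉ l) (hm₁ : m₁ ∈ L) (hm₂ : m₂ ∈ L) (hne : m₁ ≠ m₂)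
    (hpm₁ : p ∈ m₁) (hpm₂ : p ∈ m₂) (h₁ : ∀ x ∈ m₁, degree B x ≤ 1)
    (h₂ : ∀ x ∈ m₂, degree B x ≤ 1) : Is2Packing L (insert m₁ (insert m₂ B)) := by
  rw [is2Packing_iff_degree_le_two] at hB ⊢
  have hm₂B : m₂ ∉ B := fun h => hpB _ h hpm₂
  have hm₁B : m₁ ∉ insert m₂ B := by
    rw [mem_insert, not_or]
    exact ⟨hne, fun h => hpB _ h hpm₁⟩
  refine ⟨insert_subset hm₁ (insert_subset hm₂ hB.1), fun x => ?_⟩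
  rw [degree_insert hm₁B, degree_insert hm₂B]
  split_ifs with hx₂ hx₁ hx₁
  · obtain rfl : x = p :=
      hL.eq_of_mem_inter hm₁ hm₂ hne (mem_inter.2 ⟨hx₁, hx₂⟩) (mem_inter.2 ⟨hpm₁, hpm₂⟩)
    simp [degree_eq_zero_of_forall_notMem hpB]
  · have := h₂ x hx₂; omega
  · have := h₁ x hx₁; omega
  · have := hB.2 x; omega

lemma exists_is2Packing_card_eq_card_add_two {p : α} (hL : IsLinearSystem P L)
    (hB : Is2Packing L B) (hpB : ∀ l ∈ B, p ∉ l) (hp : (#B).choose 2 + 2 ≤ degree L p) :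
    ∃ R, Is2Packing L R ∧ #R = #B + 2 := by
  set Q := P.filter (2 ≤ degree B ·)
  have hpQ : p ∉ Q := by simp [Q, degree_eq_zero_of_forall_notMem hpB]
  have hQ : #Q ≤ (#B).choose 2 := card_filter_two_le_degree_le_choose (hL.mono hB.1)
  have hmeet := card_lines_through_meeting_le hL hpQ
  have hsplit := card_filter_add_card_filter_not (s := L.filter (p ∈ ·)) (fun m => ∃ x ∈ Q, x ∈ m)
  obtain ⟨m₁, hm₁, m₂, hm₂, hne⟩ := one_lt_card.1 (by unfold degree at hp; omega :
    1 < #((L.filter (p ∈ ·)).filter fun m => ¬∃ x ∈ Q, x ∈ m))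
  simp only [mem_filter] at hm₁ hm₂
  have havoid : ∀ m ∈ L, (¬∃ x ∈ Q, x ∈ m) → ∀ x ∈ m, degree B x ≤ 1 := fun m hm hQm x hx => by
    by_contra! h
    exact hQm ⟨x, mem_filter.2 ⟨hL.2.1 m hm hx, h⟩, hx⟩
  refine ⟨_, hB.insert_insert hL hpB hm₁.1.1 hm₂.1.1 hne hm₁.1.2 hm₂.1.2
    (havoid _ hm₁.1.1 hm₁.2) (havoid _ hm₂.1.1 hm₂.2), ?_⟩
  rw [card_insert_of_notMem (mem_insert.not.2 (not_or.2 ⟨hne, fun h => hpB _ h hm₁.1.2⟩)),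
    card_insert_of_notMem fun h => hpB _ h hm₂.1.2]

end

/-- Any linear system with `ν₂ = 4` and `Δ ≥ 5` has `τ ≤ 3`. -/
theorem stmt8 {α : Type*} [DecidableEq α] (P : Finset α) (L : Finset (Finset α))
    (hLS : IsLinearSystem P L) (hν : nu2 L = 4) (hΔ : 5 ≤ maxDegree P L) :
    tau P L ≤ 3 := by
  obtain ⟨p, hpP, hp⟩ := (Finset.le_sup_iff (by norm_num)).1 hΔ
  set M := L.filter (p ∉ ·)
  by_cases hpack : ∃ B ⊆ M, #B = 3 ∧ Is2Packing L B
  · obtain ⟨B, hBM, hB3, hB⟩ := hpack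
    obtain ⟨R, hR, hR5⟩ := exists_is2Packing_card_eq_card_add_two hLS hB
      (fun l hl => (mem_filter.1 (hBM hl)).2) (by rw [hB3]; exact hp)
    have := card_le_nu2 hR
    omega
  · push Not at hpack
    obtain ⟨T, hT, hT2⟩ := exists_isTransversal_card_le_two_of_concurrent
      (hLS.mono (filter_subset _ _)) fun B hBM hB3 =>
        exists_forall_mem_of_not_is2Packing (hBM.trans (filter_subset _ _)) hB3.le
          (hpack B hBM hB3)
    calc tau P L ≤ #(insert p T) := tau_le_card (hT.insert_of_filter_notMem hpP)
      _ ≤ 3 := (card_insert_le _ _).trans (by omega)
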